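/- arXiv:2204.10117 — 4 statements merged into one kernel-verified Lean document; each statement's English description precedes it below -/
import Mathlib

section
/- Let {A_n}, {B_n} be sequences of invertible bounded operators on a Banach space B, 0 < α₂ < α₁, ℓ ≥ 1, and closed subspaces E, E′, F, F′ of a closed subspace B₀ with B₀ = E ⊕ E′ = F ⊕ F′. Suppose for some fixed n: (i) ‖A_n u‖ ≤ ℓ α₂ⁿ ‖u‖ for u ∈ E and ‖A_n v‖ ≥ ℓ⁻¹ α₁ⁿ ‖v‖ for v ∈ E′; (ii) the same bounds hold for B_n on F and F′; (iii) max{‖v‖, ‖w‖} ≤ ℓ ‖v+w‖ whenever v ∈ E, w ∈ E′ or v ∈ F, w ∈ F′. Then for every δ < 1 and a ≥ α₁ such that (α₂/a)^{n+1} ≤ δ < (α₂/a)^n and ‖A_n − B_n‖ ≤ δ aⁿ, one has d̂(E,F) ≤ (4+2ℓ)·ℓ²·(α₁/α₂)·δ^{log(α₂/α₁)/log(α₂/a)}. -/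
/-!
Write a unit vector `v ∈ B₀` as `v = w + w'` along the splitting `F ⊕ F'`. If `v ∈ E`, then `A_n`
contracts `v`, so `B_n v` is small because `‖A_n - B_n‖ ≤ δ aⁿ`; the bounded angle between `F` and
`F'` keeps `B_n w` small as well, so `B_n w'` is small, and since `B_n` expands `F'` by `α₁ⁿ/ℓ`, the
component `w'` is of order `(α₂/α₁)ⁿ`. Then `w/‖w‖` is a unit vector of `F` within `2‖w'‖` of `v`.
The window `(α₂/a)^{n+1} ≤ δ` converts `(α₂/α₁)^{n+1}` into `δ^{log(α₂/α₁)/log(α₂/a)}`.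
-/

open Metric

variable {B : Type*} [NormedAddCommGroup B] [NormedSpace ℝ B]

def unitSph (E : Submodule ℝ B) : Set B := {v : B | v ∈ E ∧ ‖v‖ = 1}

/-- `dist(E,F) = sup_{v ∈ S_E} dist(v, S_F)`. -/
noncomputable def distSphOne (E F : Submodule ℝ B) : ℝ :=
  sSup {r : ℝ | ∃ v ∈ unitSph E, r = infDist v (unitSph F)}

/-- The Hausdorff distance between unit spheres `d̂(E,F)`. -/
noncomputable def distSphHat (E F : Submodule ℝ B) : ℝ :=
  max (distSphOne E F) (distSphOne F E)

open NormedSpace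

section

variable {C : Type*} [NormedAddCommGroup C] [NormedSpace ℝ C]

theorem infDist_unitSph_le_two_mul_norm_sub {G : Submodule ℝ B} {v w : B} (hv : ‖v‖ = 1)
    (hw : w ∈ G) : infDist v (unitSph G) ≤ 2 * ‖v - w‖ := by
  rcases eq_or_ne w 0 with rfl | hw0
  · rw [sub_zero, hv, mul_one]
    rcases (unitSph G).eq_empty_or_nonempty with hG | ⟨u, hu⟩
    · rw [hG, infDist_empty]
      norm_num
    · calc infDist v (unitSph G) ≤ dist v u := infDist_le_dist_of_mem hu
        _ ≤ ‖v‖ + ‖u‖ := dist_le_norm_add_norm v u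
        _ = 2 := by rw [hv, hu.2]; norm_num
  · have hu : normalize w ∈ unitSph G := ⟨G.smul_mem _ hw, norm_normalize_eq_one_iff.2 hw0⟩
    have hwu : ‖w - normalize w‖ ≤ ‖v - w‖ := by
      calc ‖w - normalize w‖ = ‖(‖w‖ - 1) • normalize w‖ := by
            rw [sub_smul, one_smul, norm_smul_normalize]
        _ = |‖v‖ - ‖w‖| := by rw [norm_smul, hu.2, mul_one, Real.norm_eq_abs, abs_sub_comm, hv]
        _ ≤ ‖v - w‖ := abs_norm_sub_norm_le v w
    calc infDist v (unitSph G) ≤ ‖v - normalize w‖ :=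
          (infDist_le_dist_of_mem hu).trans_eq (dist_eq_norm _ _)
      _ ≤ ‖v - w‖ + ‖w - normalize w‖ := norm_sub_le_norm_sub_add_norm_sub _ _ _
      _ ≤ 2 * ‖v - w‖ := by linarith

variable {G G' : Submodule ℝ B} {S : B →L[ℝ] C} {c m ℓ : ℝ}

theorem norm_mem_right_le_of_dominated (hm : 0 < m) (hc : 0 ≤ c)
    (hS : ∀ u ∈ G, ‖S u‖ ≤ c * ‖u‖) (hS' : ∀ v ∈ G', m * ‖v‖ ≤ ‖S v‖)
    (hdom : ∀ v ∈ G, ∀ w ∈ G', max ‖v‖ ‖w‖ ≤ ℓ * ‖v + w‖)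
    {w w' : B} (hw : w ∈ G) (hw' : w' ∈ G') :
    ‖w'‖ ≤ (‖S (w + w')‖ + c * (ℓ * ‖w + w'‖)) / m := by
  rw [le_div_iff₀' hm]
  have hSw : ‖S w‖ ≤ c * (ℓ * ‖w + w'‖) :=
    (hS w hw).trans (by gcongr; exact (le_max_left _ _).trans (hdom w hw w' hw'))
  calc m * ‖w'‖ ≤ ‖S w'‖ := hS' w' hw'
    _ = ‖S (w + w') - S w‖ := by rw [map_add, add_sub_cancel_left]
    _ ≤ ‖S (w + w')‖ + ‖S w‖ := norm_sub_le _ _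
    _ ≤ ‖S (w + w')‖ + c * (ℓ * ‖w + w'‖) := by gcongr

theorem infDist_unitSph_le_of_dominated {T : B →L[ℝ] C} {ε : ℝ} (hm : 0 < m) (hc : 0 ≤ c)
    (hS : ∀ u ∈ G, ‖S u‖ ≤ c * ‖u‖) (hS' : ∀ v ∈ G', m * ‖v‖ ≤ ‖S v‖)
    (hdom : ∀ v ∈ G, ∀ w ∈ G', max ‖v‖ ‖w‖ ≤ ℓ * ‖v + w‖) (hTS : ‖T - S‖ ≤ ε)
    {v : B} (hv : v ∈ G ⊔ G') (hv1 : ‖v‖ = 1) :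
    infDist v (unitSph G) ≤ 2 * ((‖T v‖ + ε + c * ℓ) / m) := by
  have hSv : ‖S v‖ ≤ ‖T v‖ + ε :=
    calc ‖S v‖ = ‖T v - (T - S) v‖ := by rw [sub_apply, sub_sub_cancel]
      _ ≤ ‖T v‖ + ‖(T - S) v‖ := norm_sub_le _ _
      _ ≤ ‖T v‖ + ε := by gcongr; simpa [hv1] using (T - S).le_of_opNorm_le hTS v
  obtain ⟨w, hw, w', hw', rfl⟩ := Submodule.mem_sup.1 hv
  calc infDist (w + w') (unitSph G) ≤ 2 * ‖w + w' - w‖ :=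
        infDist_unitSph_le_two_mul_norm_sub hv1 hw
    _ = 2 * ‖w'‖ := by rw [add_sub_cancel_left]
    _ ≤ 2 * ((‖T (w + w')‖ + ε + c * ℓ) / m) := by
        gcongr
        refine (norm_mem_right_le_of_dominated hm hc hS hS' hdom hw hw').trans ?_
        rw [hv1, mul_one]
        gcongr

theorem distSphOne_le_of_dominated {E : Submodule ℝ B} (hE : E ≤ G ⊔ G') {T : B →L[ℝ] C}
    {ε : ℝ} (hm : 0 < m) (hc : 0 ≤ c) (hℓ : 0 ≤ ℓ) (hT : ∀ u ∈ E, ‖T u‖ ≤ c * ‖u‖)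
    (hS : ∀ u ∈ G, ‖S u‖ ≤ c * ‖u‖) (hS' : ∀ v ∈ G', m * ‖v‖ ≤ ‖S v‖)
    (hdom : ∀ v ∈ G, ∀ w ∈ G', max ‖v‖ ‖w‖ ≤ ℓ * ‖v + w‖) (hTS : ‖T - S‖ ≤ ε) :
    distSphOne E G ≤ 2 * ((c + ε + c * ℓ) / m) := by
  have hε : 0 ≤ ε := (norm_nonneg _).trans hTS
  refine Real.sSup_le ?_ (by positivity)
  rintro r ⟨v, ⟨hvE, hv1⟩, rfl⟩
  refine (infDist_unitSph_le_of_dominated hm hc hS hS' hdom hTS (hE hvE) hv1).trans ?_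
  gcongr
  simpa [hv1] using hT v hvE

end

theorem div_pow_le_rpow_log_div_log {α₁ α₂ a δ : ℝ} {k : ℕ} (hα₂ : 0 < α₂) (hα : α₂ < α₁) (ha : α₁ ≤ a)
    (hδ : (α₂ / a) ^ k ≤ δ) :
    (α₂ / α₁) ^ k ≤ δ ^ (Real.log (α₂ / α₁) / Real.log (α₂ / a)) := by
  have hα₁ : 0 < α₁ := hα₂.trans hα
  have hx : 0 < α₂ / a := div_pos hα₂ (hα₁.trans_le ha)
  have hx1 : α₂ / a < 1 := (div_lt_one (hα₁.trans_le ha)).2 (hα.trans_le ha)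
  rw [Real.log_div_log]
  calc (α₂ / α₁) ^ k = ((α₂ / a) ^ Real.logb (α₂ / a) (α₂ / α₁)) ^ k := by
        rw [Real.rpow_logb hx hx1.ne (div_pos hα₂ hα₁)]
    _ = ((α₂ / a) ^ k) ^ Real.logb (α₂ / a) (α₂ / α₁) := Real.rpow_pow_comm hx.le _ _
    _ ≤ δ ^ Real.logb (α₂ / a) (α₂ / α₁) := by
        gcongr
        exact Real.logb_nonneg_of_base_lt_one hx hx1 (div_pos hα₂ hα₁) ((div_le_one hα₁).2 hα.le)

theorem comparison_constant_le {α₁ α₂ ℓ a δ : ℝ} {n : ℕ} (hα₂ : 0 < α₂) (hα : α₂ < α₁)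
    (hℓ : 1 ≤ ℓ) (ha : α₁ ≤ a) (hδ₁ : (α₂ / a) ^ (n + 1) ≤ δ) (hδ₂ : δ < (α₂ / a) ^ n) :
    2 * ((ℓ * α₂ ^ n + δ * a ^ n + ℓ * α₂ ^ n * ℓ) / (ℓ⁻¹ * α₁ ^ n)) ≤
      (4 + 2 * ℓ) * ℓ ^ 2 * (α₁ / α₂) * δ ^ (Real.log (α₂ / α₁) / Real.log (α₂ / a)) := by
  have hα₁ : 0 < α₁ := hα₂.trans hα
  have hℓ0 : 0 < ℓ := one_pos.trans_le hℓ
  have hδa : δ * a ^ n ≤ α₂ ^ n := by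
    have := mul_le_mul_of_nonneg_right hδ₂.le (pow_nonneg (hα₁.trans_le ha).le n)
    rwa [div_pow, div_mul_cancel₀ _ (pow_ne_zero n (hα₁.trans_le ha).ne')] at this
  calc 2 * ((ℓ * α₂ ^ n + δ * a ^ n + ℓ * α₂ ^ n * ℓ) / (ℓ⁻¹ * α₁ ^ n))
      ≤ 2 * ((ℓ * α₂ ^ n + α₂ ^ n + ℓ * α₂ ^ n * ℓ) / (ℓ⁻¹ * α₁ ^ n)) := by gcongr
    _ = 2 * ℓ * (ℓ + 1 + ℓ ^ 2) * (α₂ / α₁) ^ n := by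
        rw [div_pow]; field_simp
    _ ≤ (4 + 2 * ℓ) * ℓ ^ 2 * (α₂ / α₁) ^ n := by gcongr ?_ * _; nlinarith
    _ = (4 + 2 * ℓ) * ℓ ^ 2 * (α₁ / α₂) * (α₂ / α₁) ^ (n + 1) := by
        rw [pow_succ (α₂ / α₁), div_pow]; field_simp
    _ ≤ _ := by gcongr; exact div_pow_le_rpow_log_div_log hα₂ hα ha hδ₁

theorem subspace_comparison_general
    (An Bn : ℕ → (B →L[ℝ] B)ˣ)
    (α₁ α₂ ℓ : ℝ) (hα₂ : 0 < α₂) (hα : α₂ < α₁) (hℓ : 1 ≤ ℓ)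
    (B₀ E E' F F' : Submodule ℝ B)
    (hEE' : E ⊔ E' = B₀)
    (hFF' : F ⊔ F' = B₀)
    (n : ℕ)
    (hAE : ∀ u ∈ E, ‖(An n : B →L[ℝ] B) u‖ ≤ ℓ * α₂ ^ n * ‖u‖)
    (hAE' : ∀ v ∈ E', ℓ⁻¹ * α₁ ^ n * ‖v‖ ≤ ‖(An n : B →L[ℝ] B) v‖)
    (hBF : ∀ u ∈ F, ‖(Bn n : B →L[ℝ] B) u‖ ≤ ℓ * α₂ ^ n * ‖u‖)
    (hBF' : ∀ v ∈ F', ℓ⁻¹ * α₁ ^ n * ‖v‖ ≤ ‖(Bn n : B →L[ℝ] B) v‖)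
    (hdomE : ∀ v ∈ E, ∀ w ∈ E', max ‖v‖ ‖w‖ ≤ ℓ * ‖v + w‖)
    (hdomF : ∀ v ∈ F, ∀ w ∈ F', max ‖v‖ ‖w‖ ≤ ℓ * ‖v + w‖)
    (δ a : ℝ) (ha : α₁ ≤ a)
    (hδ₁ : (α₂ / a) ^ (n + 1) ≤ δ) (hδ₂ : δ < (α₂ / a) ^ n)
    (hAB : ‖(An n : B →L[ℝ] B) - (Bn n : B →L[ℝ] B)‖ ≤ δ * a ^ n) :
    distSphHat E F ≤
      (4 + 2 * ℓ) * ℓ ^ 2 * (α₁ / α₂) *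
        δ ^ (Real.log (α₂ / α₁) / Real.log (α₂ / a)) := by
  have hℓ0 : 0 ≤ ℓ := zero_le_one.trans hℓ
  have hm : 0 < ℓ⁻¹ * α₁ ^ n := by have := hα₂.trans hα; positivity
  have hc : 0 ≤ ℓ * α₂ ^ n := by positivity
  have hEF : E ≤ F ⊔ F' := hFF' ▸ hEE' ▸ le_sup_left
  have hFE : F ≤ E ⊔ E' := hEE' ▸ hFF' ▸ le_sup_left
  refine max_le ?_ ?_ |>.trans (comparison_constant_le hα₂ hα hℓ ha hδ₁ hδ₂)
  · exact distSphOne_le_of_dominated hEF hm hc hℓ0 hAE hBF hBF' hdomF hAB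
  · exact distSphOne_le_of_dominated hFE hm hc hℓ0 hBF hAE hAE' hdomE (by rwa [norm_sub_rev])

/-- Comparison of subspaces for two sequences of invertible operators with a dominated
splitting: under the expansion/contraction bounds (i)–(iii), if `‖A_n − B_n‖ ≤ δ aⁿ`
with `(α₂/a)^{n+1} ≤ δ < (α₂/a)^n`, then
`d̂(E,F) ≤ (4+2ℓ) ℓ² (α₁/α₂) δ^{log(α₂/α₁)/log(α₂/a)}`. -/
theorem subspace_comparison [CompleteSpace B]
    (An Bn : ℕ → (B →L[ℝ] B)ˣ)
    (α₁ α₂ ℓ : ℝ) (hα₂ : 0 < α₂) (hα : α₂ < α₁) (hℓ : 1 ≤ ℓ)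
    (B₀ E E' F F' : Submodule ℝ B)
    (hEc : IsClosed (E : Set B)) (hE'c : IsClosed (E' : Set B))
    (hFc : IsClosed (F : Set B)) (hF'c : IsClosed (F' : Set B))
    (hB₀c : IsClosed (B₀ : Set B))
    (hEE' : E ⊔ E' = B₀) (hEE'd : E ⊓ E' = ⊥)
    (hFF' : F ⊔ F' = B₀) (hFF'd : F ⊓ F' = ⊥)
    (n : ℕ)
    (hAE : ∀ u ∈ E, ‖(An n : B →L[ℝ] B) u‖ ≤ ℓ * α₂ ^ n * ‖u‖)
    (hAE' : ∀ v ∈ E', ℓ⁻¹ * α₁ ^ n * ‖v‖ ≤ ‖(An n : B →L[ℝ] B) v‖)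
    (hBF : ∀ u ∈ F, ‖(Bn n : B →L[ℝ] B) u‖ ≤ ℓ * α₂ ^ n * ‖u‖)
    (hBF' : ∀ v ∈ F', ℓ⁻¹ * α₁ ^ n * ‖v‖ ≤ ‖(Bn n : B →L[ℝ] B) v‖)
    (hdomE : ∀ v ∈ E, ∀ w ∈ E', max ‖v‖ ‖w‖ ≤ ℓ * ‖v + w‖)
    (hdomF : ∀ v ∈ F, ∀ w ∈ F', max ‖v‖ ‖w‖ ≤ ℓ * ‖v + w‖)
    (δ a : ℝ) (hδ : δ < 1) (ha : α₁ ≤ a)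
    (hδ₁ : (α₂ / a) ^ (n + 1) ≤ δ) (hδ₂ : δ < (α₂ / a) ^ n)
    (hAB : ‖(An n : B →L[ℝ] B) - (Bn n : B →L[ℝ] B)‖ ≤ δ * a ^ n) :
    distSphHat E F ≤
      (4 + 2 * ℓ) * ℓ ^ 2 * (α₁ / α₂) *
        δ ^ (Real.log (α₂ / α₁) / Real.log (α₂ / a)) :=
  subspace_comparison_general An Bn α₁ α₂ ℓ hα₂ hα hℓ B₀ E E' F F' hEE' hFF' n hAE hAE' hBF hBF'
    hdomE hdomF δ a ha hδ₁ hδ₂ hAB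
end

section
/- Let Q = {u ∈ B₀ : ‖A_n u‖ ≤ 2ℓ α₂ⁿ ‖u‖} where B₀ = E ⊕ E′, ‖A_n u‖ ≤ ℓ α₂ⁿ ‖u‖ for u ∈ E, ‖A_n v‖ ≥ ℓ⁻¹ α₁ⁿ ‖v‖ for v ∈ E′, and max{‖v₁‖,‖v₂‖} ≤ ℓ‖v₁+v₂‖ for v₁ ∈ E, v₂ ∈ E′. Then every v ∈ Q satisfies dist(v, E) ≤ (2+ℓ)·ℓ²·(α₂/α₁)ⁿ·‖v‖. -/
open Metric

/-!
Split `v ∈ Q` as `v = v₁ + v₂` with `v₁ ∈ E`, `v₂ ∈ E'`, so that `dist(v, E) ≤ ‖v₂‖`.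
Domination gives `‖v₁‖ ≤ ℓ‖v‖`, hence `‖A_n v₂‖ ≤ ‖A_n v‖ + ‖A_n v₁‖ ≤ (2 + ℓ) ℓ α₂ⁿ ‖v‖`,
while expansion on `E'` gives `‖A_n v₂‖ ≥ ℓ⁻¹ α₁ⁿ ‖v₂‖`; comparing the two bounds `‖v₂‖`.
-/

theorem Metric.infDist_add_le_norm {E : Type*} [SeminormedAddGroup E] {s : Set E} {x : E}
    (hx : x ∈ s) (y : E) : infDist (x + y) s ≤ ‖y‖ :=
  (infDist_le_dist_of_mem hx).trans_eq (dist_self_add_left y x)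

theorem le_mul_div_of_inv_mul_le {ℓ γ x y : ℝ} (hℓ : 0 < ℓ) (hγ : 0 < γ)
    (h : ℓ⁻¹ * γ * x ≤ y) : x ≤ ℓ * y / γ := by
  rw [le_div_iff₀ hγ]
  rw [mul_assoc, inv_mul_le_iff₀ hℓ] at h
  linarith

theorem norm_map_add_right_le {B F 𝓕 : Type*} [SeminormedAddCommGroup B]
    [SeminormedAddCommGroup F] [FunLike 𝓕 B F] [AddMonoidHomClass 𝓕 B F] (A : 𝓕)
    {v₁ v₂ : B} {ℓ β : ℝ} (hℓβ : 0 ≤ ℓ * β) (hAv₁ : ‖A v₁‖ ≤ ℓ * β * ‖v₁‖)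
    (hv₁ : ‖v₁‖ ≤ ℓ * ‖v₁ + v₂‖) (hAv : ‖A (v₁ + v₂)‖ ≤ 2 * ℓ * β * ‖v₁ + v₂‖) :
    ‖A v₂‖ ≤ (2 + ℓ) * ℓ * β * ‖v₁ + v₂‖ := by
  have hsub : ‖A v₂‖ ≤ ‖A (v₁ + v₂)‖ + ‖A v₁‖ := by
    simpa only [map_add, add_sub_cancel_left] using norm_sub_le (A (v₁ + v₂)) (A v₁)
  have hv₁' : ℓ * β * ‖v₁‖ ≤ ℓ * β * (ℓ * ‖v₁ + v₂‖) := mul_le_mul_of_nonneg_left hv₁ hℓβ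
  linarith

/-- Vectors in the cone `Q = {u ∈ B₀ : ‖A_n u‖ ≤ 2ℓ α₂ⁿ ‖u‖}` are close to `E`:
every `v ∈ Q` satisfies `dist(v,E) ≤ (2+ℓ) ℓ² (α₂/α₁)ⁿ ‖v‖`. -/
theorem cone_close_to_E
    {B : Type*} [NormedAddCommGroup B] [NormedSpace ℝ B]
    (An : B →L[ℝ] B) (B₀ E E' : Submodule ℝ B)
    (ℓ α₁ α₂ : ℝ) (n : ℕ) (hℓ : 1 ≤ ℓ) (hα₂ : 0 < α₂) (hα : α₂ < α₁)
    (hsplit : ∀ v ∈ B₀, ∃ v₁ ∈ E, ∃ v₂ ∈ E', v = v₁ + v₂)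
    (hAE : ∀ u ∈ E, ‖An u‖ ≤ ℓ * α₂ ^ n * ‖u‖)
    (hAE' : ∀ v ∈ E', ℓ⁻¹ * α₁ ^ n * ‖v‖ ≤ ‖An v‖)
    (hdom : ∀ v₁ ∈ E, ∀ v₂ ∈ E', max ‖v₁‖ ‖v₂‖ ≤ ℓ * ‖v₁ + v₂‖) :
    ∀ v ∈ B₀, ‖An v‖ ≤ 2 * ℓ * α₂ ^ n * ‖v‖ →
      infDist v (E : Set B) ≤ (2 + ℓ) * ℓ ^ 2 * (α₂ / α₁) ^ n * ‖v‖ := by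
  intro v hv hQ
  obtain ⟨v₁, hv₁, v₂, hv₂, rfl⟩ := hsplit v hv
  have hℓ₀ : 0 < ℓ := one_pos.trans_le hℓ
  have hAv₂ : ‖An v₂‖ ≤ (2 + ℓ) * ℓ * α₂ ^ n * ‖v₁ + v₂‖ :=
    norm_map_add_right_le An (by positivity) (hAE v₁ hv₁)
      ((le_max_left _ _).trans (hdom v₁ hv₁ v₂ hv₂)) hQ
  have hv₂_le : ‖v₂‖ ≤ ℓ * ((2 + ℓ) * ℓ * α₂ ^ n * ‖v₁ + v₂‖) / α₁ ^ n :=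
    le_mul_div_of_inv_mul_le hℓ₀ (pow_pos (hα₂.trans hα) n) ((hAE' v₂ hv₂).trans hAv₂)
  calc infDist (v₁ + v₂) (E : Set B) ≤ ‖v₂‖ := infDist_add_le_norm hv₁ v₂
    _ ≤ ℓ * ((2 + ℓ) * ℓ * α₂ ^ n * ‖v₁ + v₂‖) / α₁ ^ n := hv₂_le
    _ = (2 + ℓ) * ℓ ^ 2 * (α₂ / α₁) ^ n * ‖v₁ + v₂‖ := by rw [div_pow]; ring
end

section
/- Let B be a Banach space with B = E⁺ ⊕ E⁻ for closed subspaces E⁺ (finite-dimensional) and E⁻, such that max{‖u‖,‖v‖} ≤ ℓ‖u+v‖ for all u ∈ E⁺, v ∈ E⁻. Let L: E⁺ → E⁻ be a bounded linear map and let F = graph(L) = {u + Lu : u ∈ E⁺}. Then ‖L‖/(ℓ(1+‖L‖)) ≤ d̂(E⁺, F) ≤ 2ℓ‖L‖. -/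
open Metric

variable {B : Type*} [NormedAddCommGroup B] [NormedSpace ℝ B]

/-- distance to the normalization of a vector. -/
lemma dist_normalize_aux (x y : B) (hx : ‖x‖ = 1) :
    dist x (‖y‖⁻¹ • y) ≤ 2 * ‖x - y‖ := by
  rcases eq_or_ne y 0 with rfl | hy
  · simp [dist_eq_norm, hx]
  · have hny : ‖y‖ ≠ 0 := norm_ne_zero_iff.mpr hy
    have h1 : dist y (‖y‖⁻¹ • y) = |‖y‖ - 1| := by
      rw [dist_eq_norm]
      have : y - ‖y‖⁻¹ • y = (1 - ‖y‖⁻¹) • y := by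
        rw [sub_smul, one_smul]
      rw [this, norm_smul, Real.norm_eq_abs]
      rw [show |1 - ‖y‖⁻¹| * ‖y‖ = |(1 - ‖y‖⁻¹) * ‖y‖| by
        rw [abs_mul, abs_of_nonneg (norm_nonneg y)]]
      congr 1
      field_simp
    have h2 : |‖y‖ - 1| ≤ ‖x - y‖ := by
      rw [← hx]
      have := abs_norm_sub_norm_le y x
      rwa [norm_sub_rev] at this
    calc dist x (‖y‖⁻¹ • y) ≤ dist x y + dist y (‖y‖⁻¹ • y) := dist_triangle _ _ _
      _ ≤ ‖x - y‖ + ‖x - y‖ := by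
          rw [dist_eq_norm, h1]; exact add_le_add le_rfl h2
      _ = 2 * ‖x - y‖ := by ring

/-- On a finite-dimensional domain, the operator norm is attained. -/
lemma exists_norm_attained {Em : Submodule ℝ B} (Ep : Submodule ℝ B)
    [FiniteDimensional ℝ Ep] (L : Ep →L[ℝ] Em) (hL : L ≠ 0) :
    ∃ u : Ep, ‖u‖ = 1 ∧ ‖L‖ ≤ ‖L u‖ := by
  have hnt : Nontrivial Ep := by
    by_contra h
    rw [not_nontrivial_iff_subsingleton] at h
    exact hL (ContinuousLinearMap.ext fun x => by
      rw [Subsingleton.elim x 0]; simp)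
  have hsph : (sphere (0 : Ep) 1).Nonempty :=
    NormedSpace.sphere_nonempty.mpr zero_le_one
  have hcomp : IsCompact (sphere (0 : Ep) 1) := isCompact_sphere _ _
  have hcont : Continuous fun u : Ep => ‖L u‖ := (L.continuous.norm)
  obtain ⟨u₀, hu₀, hmax⟩ := hcomp.exists_isMaxOn hsph hcont.continuousOn
  refine ⟨u₀, by simpa using hu₀, ?_⟩
  apply L.opNorm_le_bound (norm_nonneg _)
  intro x
  rcases eq_or_ne x 0 with rfl | hx
  · simp
  · have hnx : ‖x‖ ≠ 0 := norm_ne_zero_iff.mpr hx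
    have hmem : ‖x‖⁻¹ • x ∈ sphere (0 : Ep) 1 := by
      simp only [mem_sphere_iff_norm, sub_zero, norm_smul, Real.norm_eq_abs,
        abs_of_nonneg (inv_nonneg.mpr (norm_nonneg x))]
      exact inv_mul_cancel₀ hnx
    have := hmax hmem
    simp only [Set.mem_setOf_eq, map_smul, norm_smul, Real.norm_eq_abs,
      abs_of_nonneg (inv_nonneg.mpr (norm_nonneg x))] at this
    have h2 : ‖L x‖ ≤ ‖x‖ * ‖L u₀‖ := by
      have := mul_le_mul_of_nonneg_left this (norm_nonneg x)
      rwa [← mul_assoc, mul_inv_cancel₀ hnx, one_mul] at this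
    linarith [h2]

set_option maxHeartbeats 1000000 in
set_option synthInstance.maxHeartbeats 200000 in
/-- If `B = E⁺ ⊕ E⁻` with `max{‖u‖,‖v‖} ≤ ℓ‖u+v‖` for `u ∈ E⁺`, `v ∈ E⁻`, and `F` is the
graph of a bounded linear map `L : E⁺ → E⁻`, then
`‖L‖/(ℓ(1+‖L‖)) ≤ d̂(E⁺,F) ≤ 2ℓ‖L‖`. -/
theorem graph_dist_estimate [CompleteSpace B]
    (Ep Em : Submodule ℝ B)
    [FiniteDimensional ℝ Ep] (hEmc : IsClosed (Em : Set B))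
    (hcompl : IsCompl Ep Em)
    (ℓ : ℝ) (hℓ : 1 ≤ ℓ)
    (hdom : ∀ u ∈ Ep, ∀ v ∈ Em, max ‖u‖ ‖v‖ ≤ ℓ * ‖u + v‖)
    (L : Ep →L[ℝ] Em) (F : Submodule ℝ B)
    (hF : ∀ w : B, w ∈ F ↔ ∃ u : Ep, w = (u : B) + (L u : B)) :
    ‖L‖ / (ℓ * (1 + ‖L‖)) ≤ distSphHat Ep F ∧ distSphHat Ep F ≤ 2 * ℓ * ‖L‖ := by
  have hℓ0 : (0:ℝ) < ℓ := lt_of_lt_of_le one_pos hℓ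
  have hLn : (0:ℝ) ≤ ‖L‖ := norm_nonneg L
  have hbound_nonneg : (0:ℝ) ≤ 2 * ℓ * ‖L‖ := by positivity
  -- upper bound on 2‖L uu‖ etc.
  constructor
  · -- lower bound
    rcases eq_or_ne L 0 with rfl | hL
    · rw [ContinuousLinearMap.opNorm_zero, zero_div]
      apply le_max_of_le_left
      apply Real.sSup_nonneg
      rintro r ⟨v, hv, rfl⟩
      exact infDist_nonneg
    · obtain ⟨u₀, hu₀n, hu₀max⟩ := exists_norm_attained Ep L hL
      have hLpos : (0:ℝ) < ‖L‖ :=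
        lt_of_le_of_ne (norm_nonneg L) fun h => hL (L.opNorm_zero_iff.mp h.symm)
      -- the sphere of F is nonempty
      have hw₀ : ((u₀ : B) + (L u₀ : B)) ≠ 0 := by
        intro h
        have hd := hdom (u₀ : B) u₀.2 (L u₀ : B) (L u₀).2
        rw [h, norm_zero, mul_zero] at hd
        have : ‖(u₀:B)‖ ≤ 0 := le_trans (le_max_left _ _) hd
        have hn : ‖(u₀:B)‖ = 1 := by rw [← hu₀n]; rfl
        linarith
      set w₀ : B := ‖(u₀:B) + (L u₀ : B)‖⁻¹ • ((u₀:B) + (L u₀ : B)) with hw₀def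
      have hw₀F : w₀ ∈ unitSph F := by
        constructor
        · exact F.smul_mem _ ((hF _).mpr ⟨u₀, rfl⟩)
        · rw [hw₀def, norm_smul, Real.norm_eq_abs,
            abs_of_nonneg (inv_nonneg.mpr (norm_nonneg _)),
            inv_mul_cancel₀ (norm_ne_zero_iff.mpr hw₀)]
      have hSF : (unitSph F).Nonempty := ⟨w₀, hw₀F⟩
      -- infDist u₀ (S_F) ≥ c
      have hkey : ∀ w ∈ unitSph F, ‖L‖ / (ℓ * (1 + ‖L‖)) ≤ dist (u₀ : B) w := by
        rintro w ⟨hwF, hwn⟩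
        obtain ⟨u', rfl⟩ := (hF w).mp hwF
        have hd := hdom ((u₀ : B) - (u' : B)) (Ep.sub_mem u₀.2 u'.2)
          (-(L u' : B)) (Em.neg_mem (L u').2)
        have heq : ((u₀:B) - (u':B)) + (-(L u':B)) = (u₀:B) - ((u':B) + (L u':B)) := by
          abel
        rw [heq] at hd
        set D := ‖(u₀:B) - ((u':B) + (L u':B))‖ with hD
        have h1 : ‖(u₀:B) - (u':B)‖ ≤ ℓ * D := le_trans (le_max_left _ _) hd
        have h2 : ‖(L u':B)‖ ≤ ℓ * D := by
          have := le_trans (le_max_right _ _) hd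
          rwa [norm_neg] at this
        -- ‖L u₀ - L u'‖ ≤ ‖L‖ * ‖u₀ - u'‖
        have h3 : ‖L u₀ - L u'‖ ≤ ‖L‖ * ‖u₀ - u'‖ := by
          rw [← map_sub]; exact L.le_opNorm _
        have hcn : ‖u₀ - u'‖ = ‖(u₀:B) - (u':B)‖ := rfl
        have hLu₀ : ‖L u₀‖ ≤ ‖L u'‖ + ‖L‖ * (ℓ * D) := by
          calc ‖L u₀‖ ≤ ‖L u₀ - L u'‖ + ‖L u'‖ := by
                have := norm_sub_norm_le (L u₀) (L u')
                linarith [norm_sub_norm_le (L u₀) (L u'),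
                  (by linarith : ‖L u₀‖ - ‖L u'‖ ≤ ‖L u₀ - L u'‖)]
            _ ≤ ‖L‖ * ‖u₀ - u'‖ + ‖L u'‖ := by linarith
            _ ≤ ‖L‖ * (ℓ * D) + ‖L u'‖ := by
                have := mul_le_mul_of_nonneg_left (hcn ▸ h1) hLn
                rw [hcn]
                linarith
            _ = ‖L u'‖ + ‖L‖ * (ℓ * D) := by ring
        have hLu'n : ‖L u'‖ = ‖(L u' : B)‖ := rfl
        have hfinal : ‖L‖ ≤ ℓ * (1 + ‖L‖) * D := by
          have : ‖L‖ ≤ ‖L u₀‖ := hu₀max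
          rw [hLu'n] at hLu₀
          nlinarith
        rw [dist_eq_norm]
        rw [div_le_iff₀ (by positivity)]
        calc ‖L‖ ≤ ℓ * (1 + ‖L‖) * D := hfinal
          _ = D * (ℓ * (1 + ‖L‖)) := by ring
      have hinf : ‖L‖ / (ℓ * (1 + ‖L‖)) ≤ infDist (u₀ : B) (unitSph F) := by
        by_contra h
        push_neg at h
        obtain ⟨w, hw, hlt⟩ := (infDist_lt_iff hSF).mp h
        exact absurd hlt (not_lt.mpr (hkey w hw))
      -- infDist u₀ ∈ the sup set, bounded above by 2
      have hu₀sph : (u₀ : B) ∈ unitSph Ep := ⟨u₀.2, hu₀n⟩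
      have hmemset : infDist (u₀ : B) (unitSph F) ∈
          {r : ℝ | ∃ v ∈ unitSph Ep, r = infDist v (unitSph F)} :=
        ⟨(u₀ : B), hu₀sph, rfl⟩
      have hbdd : BddAbove {r : ℝ | ∃ v ∈ unitSph Ep, r = infDist v (unitSph F)} := by
        refine ⟨2, ?_⟩
        rintro r ⟨v, ⟨hv, hvn⟩, rfl⟩
        calc infDist v (unitSph F) ≤ dist v w₀ := infDist_le_dist_of_mem hw₀F
          _ ≤ ‖v‖ + ‖w₀‖ := by
              rw [dist_eq_norm]; exact norm_sub_le _ _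
          _ = 2 := by rw [hvn, hw₀F.2]; norm_num
      apply le_max_of_le_left
      exact le_trans hinf (le_csSup hbdd hmemset)
  · -- upper bound
    apply max_le
    · apply Real.sSup_le _ hbound_nonneg
      rintro r ⟨v, ⟨hv, hvn⟩, rfl⟩
      set uu : Ep := ⟨v, hv⟩ with huu
      have huun : ‖uu‖ = 1 := hvn
      set w : B := v + (L uu : B) with hwdef
      have hwF : w ∈ F := (hF w).mpr ⟨uu, rfl⟩
      have hw0 : w ≠ 0 := by
        intro h
        have hd := hdom v hv (L uu : B) (L uu).2
        rw [← hwdef, h, norm_zero, mul_zero] at hd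
        have : ‖v‖ ≤ 0 := le_trans (le_max_left _ _) hd
        linarith [hvn ▸ this]
      have hwsph : (‖w‖⁻¹ • w) ∈ unitSph F := by
        refine ⟨F.smul_mem _ hwF, ?_⟩
        rw [norm_smul, Real.norm_eq_abs,
          abs_of_nonneg (inv_nonneg.mpr (norm_nonneg _)),
          inv_mul_cancel₀ (norm_ne_zero_iff.mpr hw0)]
      have h1 : infDist v (unitSph F) ≤ dist v (‖w‖⁻¹ • w) :=
        infDist_le_dist_of_mem hwsph
      have h2 : dist v (‖w‖⁻¹ • w) ≤ 2 * ‖v - w‖ := dist_normalize_aux v w hvn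
      have h3 : ‖v - w‖ = ‖(L uu : B)‖ := by
        rw [hwdef]
        rw [show v - (v + (L uu : B)) = -(L uu : B) by abel, norm_neg]
      have h4 : ‖(L uu : B)‖ ≤ ‖L‖ := by
        have := L.le_opNorm uu
        rw [huun, mul_one] at this
        exact this
      have h5 : 2 * ‖L‖ ≤ 2 * ℓ * ‖L‖ := by nlinarith
      linarith
    · apply Real.sSup_le _ hbound_nonneg
      rintro r ⟨wv, ⟨hwF, hwn⟩, rfl⟩
      obtain ⟨u, rfl⟩ := (hF wv).mp hwF
      set w : B := (u : B) + (L u : B) with hwdef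
      have hd := hdom (u : B) u.2 (L u : B) (L u).2
      have hu_le : ‖(u:B)‖ ≤ ℓ := by
        have := le_trans (le_max_left _ _) hd
        rwa [← hwdef, hwn, mul_one] at this
      have hu0 : (u : B) ≠ 0 := by
        intro h
        have hu0' : u = 0 := Subtype.ext h
        have hw0 : w = 0 := by rw [hwdef, hu0']; simp
        rw [hw0, norm_zero] at hwn
        norm_num at hwn
      have husph : (‖(u:B)‖⁻¹ • (u:B)) ∈ unitSph Ep := by
        refine ⟨Ep.smul_mem _ u.2, ?_⟩
        rw [norm_smul, Real.norm_eq_abs,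
          abs_of_nonneg (inv_nonneg.mpr (norm_nonneg _)),
          inv_mul_cancel₀ (norm_ne_zero_iff.mpr hu0)]
      have h1 : infDist w (unitSph Ep) ≤ dist w (‖(u:B)‖⁻¹ • (u:B)) :=
        infDist_le_dist_of_mem husph
      have h2 : dist w (‖(u:B)‖⁻¹ • (u:B)) ≤ 2 * ‖w - (u:B)‖ :=
        dist_normalize_aux w (u:B) hwn
      have h3 : ‖w - (u:B)‖ = ‖(L u : B)‖ := by
        rw [hwdef, show (u:B) + (L u : B) - (u:B) = (L u : B) by abel]
      have h4 : ‖(L u : B)‖ ≤ ‖L‖ * ℓ := by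
        have h := L.le_opNorm u
        have hn : ‖u‖ = ‖(u:B)‖ := rfl
        calc ‖(L u : B)‖ = ‖L u‖ := rfl
          _ ≤ ‖L‖ * ‖u‖ := h
          _ ≤ ‖L‖ * ℓ := by rw [hn]; exact mul_le_mul_of_nonneg_left hu_le hLn
      linarith
end

section
/- Let B = E⁺ ⊕ E⁻ be a Banach space and L: E⁺ → E⁻ a bounded operator with ‖L‖ ≤ 1. Let F = graph(L) and Φ = Id + L: E⁺ → F. Then for any subspace W ⊆ F, the Hausdorff distance between unit spheres satisfies d̂(Φ⁻¹(W), W) ≤ 4‖L‖. -/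
/-!
A unit vector `u ∈ Φ⁻¹W` and its image `u + L u ∈ W` differ by `L u`, of norm at most `‖L‖`;
conversely a unit vector `w = u + L u ∈ W` has `(1 - ‖L‖) ‖u‖ ≤ 1`, so `‖u‖ ≤ 2` and `w` differs
from `u ∈ Φ⁻¹W` by at most `2‖L‖`. Rescaling a nonzero vector onto the unit sphere at most
doubles its distance to a unit vector, which gives `4‖L‖` in both directions.
-/

open Metric

variable {B : Type*} [NormedAddCommGroup B] [NormedSpace ℝ B]

lemma one_sub_opNorm_mul_norm_le_norm_add_apply {𝕜 : Type*} [NontriviallyNormedField 𝕜]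
    {E : Type*} [SeminormedAddCommGroup E] [NormedSpace 𝕜 E] {p q : Submodule 𝕜 E}
    (L : p →L[𝕜] q) (u : p) : (1 - ‖L‖) * ‖u‖ ≤ ‖(u : E) + L u‖ := by
  have hLu : ‖(L u : E)‖ ≤ ‖L‖ * ‖u‖ := L.le_opNorm u
  have htri : ‖(u : E)‖ - ‖(L u : E)‖ ≤ ‖(u : E) + L u‖ := norm_sub_le_norm_add _ _
  rw [Submodule.coe_norm] at *
  nlinarith

lemma dist_inv_norm_smul_le {E : Type*} [NormedAddCommGroup E] [NormedSpace ℝ E] {v w : E}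
    (hv : ‖v‖ = 1) : dist v (‖w‖⁻¹ • w) ≤ 2 * ‖v - w‖ := by
  rcases eq_or_ne w 0 with rfl | hw
  · simp [hv]
  have hscale : ‖w - ‖w‖⁻¹ • w‖ = |‖w‖ - 1| := by
    rw [show w - ‖w‖⁻¹ • w = (1 - ‖w‖⁻¹) • w by rw [sub_smul, one_smul], norm_smul,
      Real.norm_eq_abs, ← abs_norm w, ← abs_mul, abs_norm, sub_mul,
      inv_mul_cancel₀ (norm_ne_zero_iff.mpr hw), one_mul]
  have hnorm : |‖w‖ - 1| ≤ ‖v - w‖ := by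
    rw [← hv, abs_sub_comm]
    exact abs_norm_sub_norm_le v w
  calc dist v (‖w‖⁻¹ • w) ≤ dist v w + dist w (‖w‖⁻¹ • w) := dist_triangle _ _ _
    _ = ‖v - w‖ + |‖w‖ - 1| := by rw [dist_eq_norm, dist_eq_norm, hscale]
    _ ≤ 2 * ‖v - w‖ := by linarith

lemma infDist_unitSph_le {E : Submodule ℝ B} {v w : B} (hv : ‖v‖ = 1) (hw : w ∈ E)
    (hvw : ‖v - w‖ < 1) : infDist v (unitSph E) ≤ 2 * ‖v - w‖ := by
  have hw0 : w ≠ 0 := by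
    rintro rfl
    rw [sub_zero, hv] at hvw
    exact lt_irrefl _ hvw
  have hmem : ‖w‖⁻¹ • w ∈ unitSph E :=
    ⟨E.smul_mem _ hw, norm_smul_inv_norm hw0⟩
  exact (infDist_le_dist_of_mem hmem).trans (dist_inv_norm_smul_le hv)

lemma distSphOne_le {E F : Submodule ℝ B} {c : ℝ} (hc : 0 ≤ c)
    (h : ∀ v ∈ unitSph E, infDist v (unitSph F) ≤ c) : distSphOne E F ≤ c :=
  Real.sSup_le (by rintro r ⟨v, hv, rfl⟩; exact h v hv) hc

theorem graph_pullback_dist_general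
    (Ep Em : Submodule ℝ B)
    (L : Ep →L[ℝ] Em) (hL : ‖L‖ < 1 / 2)
    (F W W' : Submodule ℝ B)
    (hF : ∀ w : B, w ∈ F ↔ ∃ u : Ep, w = (u : B) + (L u : B))
    (hWF : W ≤ F)
    (hW' : ∀ v : B, v ∈ W' ↔ ∃ u : Ep, ((u : B) + (L u : B)) ∈ W ∧ v = (u : B)) :
    distSphHat W' W ≤ 4 * ‖L‖ := by
  have hL0 : 0 ≤ ‖L‖ := norm_nonneg L
  refine max_le (distSphOne_le (by linarith) ?_) (distSphOne_le (by linarith) ?_)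
  · rintro v ⟨hvW', hv⟩
    obtain ⟨u, huW, rfl⟩ := (hW' v).mp hvW'
    have hLu : ‖(u : B) - (u + L u)‖ ≤ ‖L‖ := by
      rw [sub_add_cancel_left, norm_neg]
      simpa [hv] using L.le_opNorm u
    calc infDist (u : B) (unitSph W) ≤ 2 * ‖(u : B) - (u + L u)‖ :=
          infDist_unitSph_le hv huW (by linarith)
      _ ≤ 4 * ‖L‖ := by linarith
  · rintro w ⟨hwW, hw⟩
    obtain ⟨u, rfl⟩ := (hF w).mp (hWF hwW)
    have huW' : (u : B) ∈ W' := (hW' u).mpr ⟨u, hwW, rfl⟩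
    have hu : ‖u‖ ≤ 2 := by
      have := one_sub_opNorm_mul_norm_le_norm_add_apply L u
      nlinarith [norm_nonneg u]
    have hLu : ‖(u : B) + L u - u‖ ≤ 2 * ‖L‖ := by
      rw [add_sub_cancel_left]
      calc ‖(L u : B)‖ ≤ ‖L‖ * ‖u‖ := L.le_opNorm u
        _ ≤ 2 * ‖L‖ := by nlinarith
    calc infDist ((u : B) + L u) (unitSph W') ≤ 2 * ‖(u : B) + L u - u‖ :=
          infDist_unitSph_le hw huW' (by linarith)
      _ ≤ 4 * ‖L‖ := by linarith

/-- If `F = graph(L)` with `‖L‖ < 1/2` and `Φ = Id + L : E⁺ → F`, then for any subspace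
`W ⊆ F` one has `d̂(Φ⁻¹(W), W) ≤ 4‖L‖`. -/
theorem graph_pullback_dist [CompleteSpace B]
    (Ep Em : Submodule ℝ B) (hcompl : IsCompl Ep Em)
    (hEpc : IsClosed (Ep : Set B)) (hEmc : IsClosed (Em : Set B))
    (L : Ep →L[ℝ] Em) (hL : ‖L‖ < 1 / 2)
    (F W W' : Submodule ℝ B)
    (hF : ∀ w : B, w ∈ F ↔ ∃ u : Ep, w = (u : B) + (L u : B))
    (hWF : W ≤ F)
    (hW' : ∀ v : B, v ∈ W' ↔ ∃ u : Ep, ((u : B) + (L u : B)) ∈ W ∧ v = (u : B)) :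
    distSphHat W' W ≤ 4 * ‖L‖ :=
  graph_pullback_dist_general Ep Em L hL F W W' hF hWF hW'
end
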